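/- There exists an admissible word of length 35 that is not the type sequence of any minimal conformation of length 39; namely, the word β β α α β α α β α α β →1 (explicitly →1←1 →1←1 →1→2←2←1 →1→2←2←1 →1←1 →1→2←2←1 →1→2←2←1 →1←1 →1→2←2←1 →1→2←2←1 →1←1 →1) is admissible, but there is no injective map Γ : {1,…,39} → ℤ³ with unit steps whose 35 windows have exactly these directed types (every realization of this word self-intersects). -/
import Mathlib


/-- Points of the cubic lattice `ℤ³`. -/
abbrev P3 : Type := Fin 3 → ℤ

def e1 : P3 := ![1, 0, 0]
def e2 : P3 := ![0, 1, 0]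
def e3 : P3 := ![0, 0, 1]

/-- Squared Euclidean norm of an integer vector; it equals `1` iff the
Euclidean norm equals `1`. -/
def sqNorm (v : P3) : ℤ := ∑ k, (v k) ^ 2

/-- A conformation of length `N`: an injective map on `{1, …, N}` whose
consecutive steps have Euclidean length one. -/
def IsConformation (N : ℕ) (Γ : ℕ → P3) : Prop :=
  Set.InjOn Γ (Set.Icc 1 N) ∧ ∀ i, 1 ≤ i → i < N → sqNorm (Γ (i + 1) - Γ i) = 1

/-- A lattice rotation: an orthogonal integer matrix of determinant one
(equivalently, a linear isometry of `ℝ³` mapping `ℤ³` onto `ℤ³` with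
determinant one). -/
def IsLatticeRotation (R : Matrix (Fin 3) (Fin 3) ℤ) : Prop :=
  R.transpose * R = 1 ∧ R.det = 1

/-- Equivalence of length-5 conformations: `Δ' k = R (Δ k) + t` for a lattice
rotation `R` and translation `t ∈ ℤ³`. -/
def Equiv5 (Δ Δ' : Fin 5 → P3) : Prop :=
  ∃ (R : Matrix (Fin 3) (Fin 3) ℤ) (t : P3),
    IsLatticeRotation R ∧ ∀ k, Δ' k = R.mulVec (Δ k) + t

/-- Reversal of a length-5 conformation (`k ↦ Δ (6 - k)` in 1-based indexing). -/
def rev5 (Δ : Fin 5 → P3) : Fin 5 → P3 := fun k => Δ k.rev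

/-- Conformation 1: vertices (0,0,0), (1,0,0), (1,1,0), (0,1,0), (0,1,1). -/
def conf1 : Fin 5 → P3 := ![![0, 0, 0], ![1, 0, 0], ![1, 1, 0], ![0, 1, 0], ![0, 1, 1]]

/-- Conformation 2: vertices (0,0,0), (0,1,0), (−1,1,0), (−1,1,1), (−1,0,1). -/
def conf2 : Fin 5 → P3 := ![![0, 0, 0], ![0, 1, 0], ![-1, 1, 0], ![-1, 1, 1], ![-1, 0, 1]]

/-- The `i`-th window of `Γ`: the 5-tuple `(Γ(i-2), …, Γ(i+2))`. -/
def window (Γ : ℕ → P3) (i : ℕ) : Fin 5 → P3 := fun k => Γ (i - 2 + (k : ℕ))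

/-- `Φ(Δ) = 1`: the 5-tuple `Δ` or its reversal is equivalent to
conformation 1 or to conformation 2. -/
def WindowGood (Δ : Fin 5 → P3) : Prop :=
  Equiv5 Δ conf1 ∨ Equiv5 (rev5 Δ) conf1 ∨ Equiv5 Δ conf2 ∨ Equiv5 (rev5 Δ) conf2

open Classical in
/-- The function `Φ` on length-5 conformations. -/
noncomputable def Phi (Δ : Fin 5 → P3) : ℤ := if WindowGood Δ then 1 else 0

/-- The energy `E₅(Γ) = −Σ_{i=3}^{N−2} Φ(Γ_i)`. -/
noncomputable def E5 (N : ℕ) (Γ : ℕ → P3) : ℤ :=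
  -∑ i ∈ Finset.Icc 3 (N - 2), Phi (window Γ i)

/-- A minimal conformation: a conformation all of whose windows satisfy `Φ = 1`. -/
def IsMinimal (N : ℕ) (Γ : ℕ → P3) : Prop :=
  IsConformation N Γ ∧ ∀ i, 3 ≤ i → i ≤ N - 2 → WindowGood (window Γ i)

/-- The walk starting at the origin (in 1-based indexing) whose steps
cyclically repeat the given list. -/
def cyclicWalk (steps : List P3) : ℕ → P3
  | 0 => 0
  | 1 => 0
  | n + 2 => cyclicWalk steps (n + 1) + steps.getD (n % steps.length) 0

/-- The 16-term step sequence of the lattice α-helix. -/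
def alphaStepList : List P3 :=
  [e1, e2, -e1, e3, -e2, e1, e2, e3, -e1, -e2, e1, e3, e2, -e1, -e2, e3]

/-- The 4-term step sequence of the lattice β-strand. -/
def betaStepList : List P3 := [e1, e2, -e1, e3]

/-- The lattice α-helix (`H(1) = 0`, steps cyclically repeating `alphaStepList`). -/
def alphaHelix : ℕ → P3 := cyclicWalk alphaStepList

/-- The lattice β-strand (`B(1) = 0`, steps cyclically repeating `betaStepList`). -/
def betaStrand : ℕ → P3 := cyclicWalk betaStepList

/-- The four directed types of windows. -/
inductive DType : Type
  | r1  -- →1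
  | l1  -- ←1
  | r2  -- →2
  | l2  -- ←2
deriving DecidableEq

/-- A window `Δ` has directed type `→1` (resp. `→2`) if it is equivalent to
conformation 1 (resp. 2), and `←1` (resp. `←2`) if its reversal is. -/
def HasType (Δ : Fin 5 → P3) : DType → Prop
  | DType.r1 => Equiv5 Δ conf1
  | DType.l1 => Equiv5 (rev5 Δ) conf1
  | DType.r2 => Equiv5 Δ conf2
  | DType.l2 => Equiv5 (rev5 Δ) conf2

/-- The six allowed ordered pairs of directed types of consecutive windows:
(→1,←1), (←1,→1), (→1,→2), (→2,←2), (←2,←1), (←2,→2). -/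
def allowedPairs : List (DType × DType) :=
  [(DType.r1, DType.l1), (DType.l1, DType.r1), (DType.r1, DType.r2),
   (DType.r2, DType.l2), (DType.l2, DType.l1), (DType.l2, DType.r2)]

/-- `w` is the type sequence of `Γ` (a conformation of length `N`):
`w` has length `N − 4` and its `j`-th letter is the directed type of the
window `Γ_{3+j}`, `j = 0, …, N−5`. -/
def HasTypeSeq (N : ℕ) (Γ : ℕ → P3) (w : List DType) : Prop :=
  w.length = N - 4 ∧ ∀ j (h : j < w.length), HasType (window Γ (3 + j)) (w.get ⟨j, h⟩)

/-- The word `α = →1→2←2←1`. -/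
def wordAlpha : List DType := [DType.r1, DType.r2, DType.l2, DType.l1]

/-- The word `β = →1←1`. -/
def wordBeta : List DType := [DType.r1, DType.l1]

/-- `v` is a finite concatenation of copies of the words `α` and `β`. -/
def IsABConcat (v : List DType) : Prop :=
  ∃ L : List (List DType), (∀ u ∈ L, u = wordAlpha ∨ u = wordBeta) ∧ v = L.flatten

/-- A word is admissible if it is a contiguous subword (factor) of some finite
concatenation of copies of `α` and `β`. -/
def Admissible (w : List DType) : Prop := ∃ v, IsABConcat v ∧ w <:+: v

/-- The two kinds of monomers. -/
inductive AB : Type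
  | A
  | B
deriving DecidableEq

/-- The number of occurrences of the letter `c` in the `i`-th 5-tuple
`S(i−2), …, S(i+2)` of the sequence `S`. -/
def countLetter (c : AB) (S : ℕ → AB) (i : ℕ) : ℕ :=
  ((Finset.Icc (i - 2) (i + 2)).filter fun k => S k = c).card

open Classical in
/-- `Φ₁(Δ) = 1` iff `Δ` or its reversal is equivalent to conformation 1. -/
noncomputable def Phi1 (Δ : Fin 5 → P3) : ℝ :=
  if Equiv5 Δ conf1 ∨ Equiv5 (rev5 Δ) conf1 then 1 else 0

open Classical in
/-- `Φ₂(Δ) = 1` iff `Δ` or its reversal is equivalent to conformation 2. -/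
noncomputable def Phi2 (Δ : Fin 5 → P3) : ℝ :=
  if Equiv5 Δ conf2 ∨ Equiv5 (rev5 Δ) conf2 then 1 else 0

/-- The heteropolymer energy
`E₅′(S,Γ) = −Σᵢ [#_B(Sᵢ)(Φ₁(Γᵢ) + ε Φ₂(Γᵢ)) + #_A(Sᵢ)(Φ₂(Γᵢ) + ε Φ₁(Γᵢ))]`. -/
noncomputable def E5' (ε : ℝ) (S : ℕ → AB) (N : ℕ) (Γ : ℕ → P3) : ℝ :=
  -∑ i ∈ Finset.Icc 3 (N - 2),
    ((countLetter AB.B S i : ℝ) * (Phi1 (window Γ i) + ε * Phi2 (window Γ i)) +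
      (countLetter AB.A S i : ℝ) * (Phi2 (window Γ i) + ε * Phi1 (window Γ i)))

/-- The word `β β α α β α α β α α β →1` of length 35. -/
def word15 : List DType :=
  wordBeta ++ wordBeta ++ wordAlpha ++ wordAlpha ++ wordBeta ++ wordAlpha ++
    wordAlpha ++ wordBeta ++ wordAlpha ++ wordAlpha ++ wordBeta ++ [DType.r1]

/-! ### Auxiliary machinery for the proof -/

/-- Cross product on `ℤ³`. -/
def cross3 (u v : P3) : P3 :=
  ![u 1 * v 2 - u 2 * v 1, u 2 * v 0 - u 0 * v 2, u 0 * v 1 - u 1 * v 0]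

lemma cross3_neg_left (u v : P3) : cross3 (-u) v = -(cross3 u v) := by
  funext i; fin_cases i <;> simp [cross3] <;> ring

lemma cross3_neg_right (u v : P3) : cross3 u (-v) = -(cross3 u v) := by
  funext i; fin_cases i <;> simp [cross3] <;> ring

lemma cross3_anticomm (u v : P3) : cross3 u v = -(cross3 v u) := by
  funext i; fin_cases i <;> simp [cross3] <;> ring

lemma rot_aux (R : Matrix (Fin 3) (Fin 3) ℤ) (u v : P3) (i : Fin 3) :
    (R.transpose.mulVec (cross3 (R.mulVec u) (R.mulVec v))) i = R.det * (cross3 u v) i := by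
  fin_cases i <;>
    simp [cross3, Matrix.mulVec, dotProduct, Fin.sum_univ_three,
      Matrix.det_fin_three, Matrix.transpose_apply] <;> ring

lemma rot_cross {R : Matrix (Fin 3) (Fin 3) ℤ} (h1 : R.transpose * R = 1) (h2 : R.det = 1)
    (u v : P3) : cross3 (R.mulVec u) (R.mulVec v) = R.mulVec (cross3 u v) := by
  have h3 : R * R.transpose = 1 := mul_eq_one_comm.mp h1
  have h4 : R.transpose.mulVec (cross3 (R.mulVec u) (R.mulVec v)) = cross3 u v := by
    funext i; rw [rot_aux, h2, one_mul]
  calc cross3 (R.mulVec u) (R.mulVec v)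
      = (R * R.transpose).mulVec (cross3 (R.mulVec u) (R.mulVec v)) := by
        rw [h3, Matrix.one_mulVec]
    _ = R.mulVec (R.transpose.mulVec (cross3 (R.mulVec u) (R.mulVec v))) := by
        rw [← Matrix.mulVec_mulVec]
    _ = R.mulVec (cross3 u v) := by rw [h4]

lemma rot_inj {R : Matrix (Fin 3) (Fin 3) ℤ} (h1 : R.transpose * R = 1) {u v : P3}
    (h : R.mulVec u = R.mulVec v) : u = v := by
  have h2 := congrArg (R.transpose.mulVec ·) h
  simpa [Matrix.mulVec_mulVec, h1, Matrix.one_mulVec] using h2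

lemma equiv_diff {Δ Δ' : Fin 5 → P3} (h : Equiv5 Δ Δ') :
    ∃ R : Matrix (Fin 3) (Fin 3) ℤ, (R.transpose * R = 1 ∧ R.det = 1) ∧
      ∀ k l, Δ' k - Δ' l = R.mulVec (Δ k - Δ l) := by
  obtain ⟨R, t, ⟨h1, h2⟩, hk⟩ := h
  exact ⟨R, ⟨h1, h2⟩, fun k l => by
    rw [hk, hk, add_sub_add_right_eq_sub, ← Matrix.mulVec_sub]⟩

section StepLemmas

variable (Γ : ℕ → P3) (j : ℕ)

lemma wv0 : window Γ (3+j) 0 = Γ (j+1) := by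
  show Γ (3+j-2+0) = Γ (j+1); exact congrArg Γ (by omega)
lemma wv1 : window Γ (3+j) 1 = Γ (j+2) := by
  show Γ (3+j-2+1) = Γ (j+2); exact congrArg Γ (by omega)
lemma wv2 : window Γ (3+j) 2 = Γ (j+3) := by
  show Γ (3+j-2+2) = Γ (j+3); exact congrArg Γ (by omega)
lemma wv3 : window Γ (3+j) 3 = Γ (j+4) := by
  show Γ (3+j-2+3) = Γ (j+4); exact congrArg Γ (by omega)
lemma wv4 : window Γ (3+j) 4 = Γ (j+5) := by
  show Γ (3+j-2+4) = Γ (j+5); exact congrArg Γ (by omega)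
lemma rv0 : rev5 (window Γ (3+j)) 0 = Γ (j+5) := by
  show Γ (3+j-2+4) = Γ (j+5); exact congrArg Γ (by omega)
lemma rv1 : rev5 (window Γ (3+j)) 1 = Γ (j+4) := by
  show Γ (3+j-2+3) = Γ (j+4); exact congrArg Γ (by omega)
lemma rv2 : rev5 (window Γ (3+j)) 2 = Γ (j+3) := by
  show Γ (3+j-2+2) = Γ (j+3); exact congrArg Γ (by omega)
lemma rv3 : rev5 (window Γ (3+j)) 3 = Γ (j+2) := by
  show Γ (3+j-2+1) = Γ (j+2); exact congrArg Γ (by omega)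
lemma rv4 : rev5 (window Γ (3+j)) 4 = Γ (j+1) := by
  show Γ (3+j-2+0) = Γ (j+1); exact congrArg Γ (by omega)

lemma stepR1A (h : Equiv5 (window Γ (3+j)) conf1) :
    Γ (j+4) - Γ (j+3) = -(Γ (j+2) - Γ (j+1)) := by
  obtain ⟨R, ⟨h1, _⟩, hd⟩ := equiv_diff h
  have e10 := hd 1 0
  have e32 := hd 3 2
  rw [wv1, wv0, show conf1 1 - conf1 0 = e1 from by decide] at e10
  rw [wv3, wv2, show conf1 3 - conf1 2 = -e1 from by decide] at e32
  apply rot_inj h1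
  rw [← e32, Matrix.mulVec_neg, ← e10]

lemma stepR1B (h : Equiv5 (window Γ (3+j)) conf1) :
    Γ (j+5) - Γ (j+4) = cross3 (Γ (j+2) - Γ (j+1)) (Γ (j+3) - Γ (j+2)) := by
  obtain ⟨R, ⟨h1, h2⟩, hd⟩ := equiv_diff h
  have e10 := hd 1 0
  have e21 := hd 2 1
  have e43 := hd 4 3
  rw [wv1, wv0, show conf1 1 - conf1 0 = e1 from by decide] at e10
  rw [wv2, wv1, show conf1 2 - conf1 1 = e2 from by decide] at e21
  rw [wv4, wv3, show conf1 4 - conf1 3 = e3 from by decide] at e43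
  apply rot_inj h1
  rw [← e43, ← rot_cross h1 h2, ← e10, ← e21]
  decide

lemma stepR1C (h : Equiv5 (window Γ (3+j)) conf1) :
    cross3 (Γ (j+5) - Γ (j+4)) (Γ (j+2) - Γ (j+1)) = Γ (j+3) - Γ (j+2) := by
  obtain ⟨R, ⟨h1, h2⟩, hd⟩ := equiv_diff h
  have e10 := hd 1 0
  have e21 := hd 2 1
  have e43 := hd 4 3
  rw [wv1, wv0, show conf1 1 - conf1 0 = e1 from by decide] at e10
  rw [wv2, wv1, show conf1 2 - conf1 1 = e2 from by decide] at e21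
  rw [wv4, wv3, show conf1 4 - conf1 3 = e3 from by decide] at e43
  apply rot_inj h1
  rw [← rot_cross h1 h2, ← e43, ← e10, ← e21]
  decide

lemma stepL1 (h : Equiv5 (rev5 (window Γ (3+j))) conf1) :
    Γ (j+5) - Γ (j+4) = -(Γ (j+3) - Γ (j+2)) := by
  obtain ⟨R, ⟨h1, _⟩, hd⟩ := equiv_diff h
  have e10 := hd 1 0
  have e32 := hd 3 2
  rw [rv1, rv0, show conf1 1 - conf1 0 = e1 from by decide] at e10
  rw [rv3, rv2, show conf1 3 - conf1 2 = -e1 from by decide] at e32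
  apply rot_inj h1
  have k1 : R.mulVec (Γ (j+5) - Γ (j+4)) = -e1 := by
    rw [show Γ (j+5) - Γ (j+4) = -(Γ (j+4) - Γ (j+5)) by abel, Matrix.mulVec_neg, ← e10]
  have k2 : R.mulVec (-(Γ (j+3) - Γ (j+2))) = -e1 := by
    rw [show -(Γ (j+3) - Γ (j+2)) = Γ (j+2) - Γ (j+3) by abel, ← e32]
  rw [k1, k2]

lemma stepR2 (h : Equiv5 (window Γ (3+j)) conf2) :
    Γ (j+5) - Γ (j+4) = -(Γ (j+2) - Γ (j+1)) := by
  obtain ⟨R, ⟨h1, _⟩, hd⟩ := equiv_diff h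
  have e10 := hd 1 0
  have e43 := hd 4 3
  rw [wv1, wv0, show conf2 1 - conf2 0 = e2 from by decide] at e10
  rw [wv4, wv3, show conf2 4 - conf2 3 = -e2 from by decide] at e43
  apply rot_inj h1
  rw [← e43, Matrix.mulVec_neg, ← e10]

lemma stepL2 (h : Equiv5 (rev5 (window Γ (3+j))) conf2) :
    Γ (j+5) - Γ (j+4) = -(Γ (j+2) - Γ (j+1)) := by
  obtain ⟨R, ⟨h1, _⟩, hd⟩ := equiv_diff h
  have e10 := hd 1 0
  have e43 := hd 4 3
  rw [rv1, rv0, show conf2 1 - conf2 0 = e2 from by decide] at e10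
  rw [rv4, rv3, show conf2 4 - conf2 3 = -e2 from by decide] at e43
  apply rot_inj h1
  have k1 : R.mulVec (Γ (j+5) - Γ (j+4)) = -e2 := by
    rw [show Γ (j+5) - Γ (j+4) = -(Γ (j+4) - Γ (j+5)) by abel, Matrix.mulVec_neg, ← e10]
  have k2 : R.mulVec (-(Γ (j+2) - Γ (j+1))) = -e2 := by
    rw [show -(Γ (j+2) - Γ (j+1)) = Γ (j+1) - Γ (j+2) by abel, ← e43]
  rw [k1, k2]

end StepLemmas

/-- the word `β β α α β α α β α α β →1` of length 35 is
admissible, but no injective map `Γ : {1,…,39} → ℤ³` with unit steps has it as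
its type sequence: every realization of this word self-intersects. -/
theorem word15_admissible_not_realizable :
    word15.length = 35 ∧ Admissible word15 ∧
      ¬∃ Γ : ℕ → P3, IsConformation 39 Γ ∧ HasTypeSeq 39 Γ word15 := by
  refine ⟨by decide, ?_, ?_⟩
  · exact ⟨word15 ++ [DType.l1],
      ⟨[wordBeta, wordBeta, wordAlpha, wordAlpha, wordBeta, wordAlpha, wordAlpha,
        wordBeta, wordAlpha, wordAlpha, wordBeta, wordBeta], by decide, by decide⟩,
      ⟨[], [DType.l1], by simp⟩⟩
  · rintro ⟨Γ, ⟨hinj, -⟩, -, htypes⟩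
    have t0 : HasType (window Γ (3+0)) DType.r1 := htypes 0 (by decide)
    have t1 : HasType (window Γ (3+1)) DType.l1 := htypes 1 (by decide)
    have t2 : HasType (window Γ (3+2)) DType.r1 := htypes 2 (by decide)
    have t3 : HasType (window Γ (3+3)) DType.l1 := htypes 3 (by decide)
    have t4 : HasType (window Γ (3+4)) DType.r1 := htypes 4 (by decide)
    have t5 : HasType (window Γ (3+5)) DType.r2 := htypes 5 (by decide)
    have t6 : HasType (window Γ (3+6)) DType.l2 := htypes 6 (by decide)
    have t7 : HasType (window Γ (3+7)) DType.l1 := htypes 7 (by decide)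
    have t8 : HasType (window Γ (3+8)) DType.r1 := htypes 8 (by decide)
    have t9 : HasType (window Γ (3+9)) DType.r2 := htypes 9 (by decide)
    have t10 : HasType (window Γ (3+10)) DType.l2 := htypes 10 (by decide)
    have t11 : HasType (window Γ (3+11)) DType.l1 := htypes 11 (by decide)
    have t12 : HasType (window Γ (3+12)) DType.r1 := htypes 12 (by decide)
    have t13 : HasType (window Γ (3+13)) DType.l1 := htypes 13 (by decide)
    have t14 : HasType (window Γ (3+14)) DType.r1 := htypes 14 (by decide)
    have t15 : HasType (window Γ (3+15)) DType.r2 := htypes 15 (by decide)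
    have t16 : HasType (window Γ (3+16)) DType.l2 := htypes 16 (by decide)
    have t17 : HasType (window Γ (3+17)) DType.l1 := htypes 17 (by decide)
    have t18 : HasType (window Γ (3+18)) DType.r1 := htypes 18 (by decide)
    have t19 : HasType (window Γ (3+19)) DType.r2 := htypes 19 (by decide)
    have t20 : HasType (window Γ (3+20)) DType.l2 := htypes 20 (by decide)
    have t21 : HasType (window Γ (3+21)) DType.l1 := htypes 21 (by decide)
    have t22 : HasType (window Γ (3+22)) DType.r1 := htypes 22 (by decide)
    have t23 : HasType (window Γ (3+23)) DType.l1 := htypes 23 (by decide)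
    have t24 : HasType (window Γ (3+24)) DType.r1 := htypes 24 (by decide)
    have t25 : HasType (window Γ (3+25)) DType.r2 := htypes 25 (by decide)
    have t26 : HasType (window Γ (3+26)) DType.l2 := htypes 26 (by decide)
    have t27 : HasType (window Γ (3+27)) DType.l1 := htypes 27 (by decide)
    have t28 : HasType (window Γ (3+28)) DType.r1 := htypes 28 (by decide)
    have t29 : HasType (window Γ (3+29)) DType.r2 := htypes 29 (by decide)
    have t30 : HasType (window Γ (3+30)) DType.l2 := htypes 30 (by decide)
    have t31 : HasType (window Γ (3+31)) DType.l1 := htypes 31 (by decide)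
    have t32 : HasType (window Γ (3+32)) DType.r1 := htypes 32 (by decide)
    have t33 : HasType (window Γ (3+33)) DType.l1 := htypes 33 (by decide)
    have t34 : HasType (window Γ (3+34)) DType.r1 := htypes 34 (by decide)
    have hs3 : Γ 4 - Γ 3 = -(Γ 2 - Γ 1) := by
      have h := stepR1A Γ 0 t0; simp only [Nat.reduceAdd] at h; exact h
    have hs4 : Γ 5 - Γ 4 = cross3 (Γ 2 - Γ 1) (Γ 3 - Γ 2) := by
      have h := stepR1B Γ 0 t0; simp only [Nat.reduceAdd] at h; exact h
    have hca : cross3 (cross3 (Γ 2 - Γ 1) (Γ 3 - Γ 2)) (Γ 2 - Γ 1) = (Γ 3 - Γ 2) := by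
      have h := stepR1C Γ 0 t0; simp only [Nat.reduceAdd] at h; rw [hs4] at h; exact h
    have hba : cross3 (Γ 3 - Γ 2) (Γ 2 - Γ 1) = -(cross3 (Γ 2 - Γ 1) (Γ 3 - Γ 2)) := cross3_anticomm _ _
    have hac : cross3 (Γ 2 - Γ 1) (cross3 (Γ 2 - Γ 1) (Γ 3 - Γ 2)) = -(Γ 3 - Γ 2) := by
      rw [cross3_anticomm (Γ 2 - Γ 1) (cross3 (Γ 2 - Γ 1) (Γ 3 - Γ 2)), hca]
    have hs5 : Γ 6 - Γ 5 = (Γ 2 - Γ 1) := by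
      have h := stepL1 Γ 1 t1; simp only [Nat.reduceAdd] at h; rw [hs3] at h; simpa only [neg_neg] using h
    have hs6 : Γ 7 - Γ 6 = (Γ 3 - Γ 2) := by
      have h := stepR1B Γ 2 t2; simp only [Nat.reduceAdd] at h; rw [hs3, hs4] at h; simpa only [cross3_neg_left, cross3_neg_right, hba, hac, hca, neg_neg] using h
    have hs7 : Γ 8 - Γ 7 = -((Γ 2 - Γ 1)) := by
      have h := stepL1 Γ 3 t3; simp only [Nat.reduceAdd] at h; rw [hs5] at h; simpa only [neg_neg] using h
    have hs8 : Γ 9 - Γ 8 = cross3 (Γ 2 - Γ 1) (Γ 3 - Γ 2) := by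
      have h := stepR1B Γ 4 t4; simp only [Nat.reduceAdd] at h; rw [hs5, hs6] at h; simpa only [cross3_neg_left, cross3_neg_right, hba, hac, hca, neg_neg] using h
    have hs9 : Γ 10 - Γ 9 = -((Γ 3 - Γ 2)) := by
      have h := stepR2 Γ 5 t5; simp only [Nat.reduceAdd] at h; rw [hs6] at h; simpa only [neg_neg] using h
    have hs10 : Γ 11 - Γ 10 = (Γ 2 - Γ 1) := by
      have h := stepL2 Γ 6 t6; simp only [Nat.reduceAdd] at h; rw [hs7] at h; simpa only [neg_neg] using h
    have hs11 : Γ 12 - Γ 11 = (Γ 3 - Γ 2) := by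
      have h := stepL1 Γ 7 t7; simp only [Nat.reduceAdd] at h; rw [hs9] at h; simpa only [neg_neg] using h
    have hs12 : Γ 13 - Γ 12 = cross3 (Γ 2 - Γ 1) (Γ 3 - Γ 2) := by
      have h := stepR1B Γ 8 t8; simp only [Nat.reduceAdd] at h; rw [hs9, hs10] at h; simpa only [cross3_neg_left, cross3_neg_right, hba, hac, hca, neg_neg] using h
    have hs13 : Γ 14 - Γ 13 = -((Γ 2 - Γ 1)) := by
      have h := stepR2 Γ 9 t9; simp only [Nat.reduceAdd] at h; rw [hs10] at h; simpa only [neg_neg] using h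
    have hs14 : Γ 15 - Γ 14 = -((Γ 3 - Γ 2)) := by
      have h := stepL2 Γ 10 t10; simp only [Nat.reduceAdd] at h; rw [hs11] at h; simpa only [neg_neg] using h
    have hs15 : Γ 16 - Γ 15 = (Γ 2 - Γ 1) := by
      have h := stepL1 Γ 11 t11; simp only [Nat.reduceAdd] at h; rw [hs13] at h; simpa only [neg_neg] using h
    have hs16 : Γ 17 - Γ 16 = cross3 (Γ 2 - Γ 1) (Γ 3 - Γ 2) := by
      have h := stepR1B Γ 12 t12; simp only [Nat.reduceAdd] at h; rw [hs13, hs14] at h; simpa only [cross3_neg_left, cross3_neg_right, hba, hac, hca, neg_neg] using h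
    have hs17 : Γ 18 - Γ 17 = -((Γ 2 - Γ 1)) := by
      have h := stepL1 Γ 13 t13; simp only [Nat.reduceAdd] at h; rw [hs15] at h; simpa only [neg_neg] using h
    have hs18 : Γ 19 - Γ 18 = -((Γ 3 - Γ 2)) := by
      have h := stepR1B Γ 14 t14; simp only [Nat.reduceAdd] at h; rw [hs15, hs16] at h; simpa only [cross3_neg_left, cross3_neg_right, hba, hac, hca, neg_neg] using h
    have hs19 : Γ 20 - Γ 19 = -(cross3 (Γ 2 - Γ 1) (Γ 3 - Γ 2)) := by
      have h := stepR2 Γ 15 t15; simp only [Nat.reduceAdd] at h; rw [hs16] at h; simpa only [neg_neg] using h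
    have hs20 : Γ 21 - Γ 20 = (Γ 2 - Γ 1) := by
      have h := stepL2 Γ 16 t16; simp only [Nat.reduceAdd] at h; rw [hs17] at h; simpa only [neg_neg] using h
    have hs21 : Γ 22 - Γ 21 = cross3 (Γ 2 - Γ 1) (Γ 3 - Γ 2) := by
      have h := stepL1 Γ 17 t17; simp only [Nat.reduceAdd] at h; rw [hs19] at h; simpa only [neg_neg] using h
    have hs22 : Γ 23 - Γ 22 = -((Γ 3 - Γ 2)) := by
      have h := stepR1B Γ 18 t18; simp only [Nat.reduceAdd] at h; rw [hs19, hs20] at h; simpa only [cross3_neg_left, cross3_neg_right, hba, hac, hca, neg_neg] using h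
    have hs23 : Γ 24 - Γ 23 = -((Γ 2 - Γ 1)) := by
      have h := stepR2 Γ 19 t19; simp only [Nat.reduceAdd] at h; rw [hs20] at h; simpa only [neg_neg] using h
    have hs24 : Γ 25 - Γ 24 = -(cross3 (Γ 2 - Γ 1) (Γ 3 - Γ 2)) := by
      have h := stepL2 Γ 20 t20; simp only [Nat.reduceAdd] at h; rw [hs21] at h; simpa only [neg_neg] using h
    have hs25 : Γ 26 - Γ 25 = (Γ 2 - Γ 1) := by
      have h := stepL1 Γ 21 t21; simp only [Nat.reduceAdd] at h; rw [hs23] at h; simpa only [neg_neg] using h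
    have hs26 : Γ 27 - Γ 26 = -((Γ 3 - Γ 2)) := by
      have h := stepR1B Γ 22 t22; simp only [Nat.reduceAdd] at h; rw [hs23, hs24] at h; simpa only [cross3_neg_left, cross3_neg_right, hba, hac, hca, neg_neg] using h
    have hs27 : Γ 28 - Γ 27 = -((Γ 2 - Γ 1)) := by
      have h := stepL1 Γ 23 t23; simp only [Nat.reduceAdd] at h; rw [hs25] at h; simpa only [neg_neg] using h
    have hs28 : Γ 29 - Γ 28 = -(cross3 (Γ 2 - Γ 1) (Γ 3 - Γ 2)) := by
      have h := stepR1B Γ 24 t24; simp only [Nat.reduceAdd] at h; rw [hs25, hs26] at h; simpa only [cross3_neg_left, cross3_neg_right, hba, hac, hca, neg_neg] using h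
    have hs29 : Γ 30 - Γ 29 = (Γ 3 - Γ 2) := by
      have h := stepR2 Γ 25 t25; simp only [Nat.reduceAdd] at h; rw [hs26] at h; simpa only [neg_neg] using h
    have hs30 : Γ 31 - Γ 30 = (Γ 2 - Γ 1) := by
      have h := stepL2 Γ 26 t26; simp only [Nat.reduceAdd] at h; rw [hs27] at h; simpa only [neg_neg] using h
    have hs31 : Γ 32 - Γ 31 = -((Γ 3 - Γ 2)) := by
      have h := stepL1 Γ 27 t27; simp only [Nat.reduceAdd] at h; rw [hs29] at h; simpa only [neg_neg] using h
    have hs32 : Γ 33 - Γ 32 = -(cross3 (Γ 2 - Γ 1) (Γ 3 - Γ 2)) := by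
      have h := stepR1B Γ 28 t28; simp only [Nat.reduceAdd] at h; rw [hs29, hs30] at h; simpa only [cross3_neg_left, cross3_neg_right, hba, hac, hca, neg_neg] using h
    have hs33 : Γ 34 - Γ 33 = -((Γ 2 - Γ 1)) := by
      have h := stepR2 Γ 29 t29; simp only [Nat.reduceAdd] at h; rw [hs30] at h; simpa only [neg_neg] using h
    have hs34 : Γ 35 - Γ 34 = (Γ 3 - Γ 2) := by
      have h := stepL2 Γ 30 t30; simp only [Nat.reduceAdd] at h; rw [hs31] at h; simpa only [neg_neg] using h
    have hs35 : Γ 36 - Γ 35 = (Γ 2 - Γ 1) := by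
      have h := stepL1 Γ 31 t31; simp only [Nat.reduceAdd] at h; rw [hs33] at h; simpa only [neg_neg] using h
    have hs36 : Γ 37 - Γ 36 = -(cross3 (Γ 2 - Γ 1) (Γ 3 - Γ 2)) := by
      have h := stepR1B Γ 32 t32; simp only [Nat.reduceAdd] at h; rw [hs33, hs34] at h; simpa only [cross3_neg_left, cross3_neg_right, hba, hac, hca, neg_neg] using h
    have hs37 : Γ 38 - Γ 37 = -((Γ 2 - Γ 1)) := by
      have h := stepL1 Γ 33 t33; simp only [Nat.reduceAdd] at h; rw [hs35] at h; simpa only [neg_neg] using h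
    have hs38 : Γ 39 - Γ 38 = (Γ 3 - Γ 2) := by
      have h := stepR1B Γ 34 t34; simp only [Nat.reduceAdd] at h; rw [hs35, hs36] at h; simpa only [cross3_neg_left, cross3_neg_right, hba, hac, hca, neg_neg] using h
    have key : Γ 39 = Γ 1 := by
      have e : Γ 39 - Γ 1 = (Γ 2 - Γ 1) + (Γ 3 - Γ 2) + (Γ 4 - Γ 3) + (Γ 5 - Γ 4) + (Γ 6 - Γ 5) + (Γ 7 - Γ 6) + (Γ 8 - Γ 7) + (Γ 9 - Γ 8) + (Γ 10 - Γ 9) + (Γ 11 - Γ 10) + (Γ 12 - Γ 11) + (Γ 13 - Γ 12) + (Γ 14 - Γ 13) + (Γ 15 - Γ 14) + (Γ 16 - Γ 15) + (Γ 17 - Γ 16) + (Γ 18 - Γ 17) + (Γ 19 - Γ 18) + (Γ 20 - Γ 19) + (Γ 21 - Γ 20) + (Γ 22 - Γ 21) + (Γ 23 - Γ 22) + (Γ 24 - Γ 23) + (Γ 25 - Γ 24) + (Γ 26 - Γ 25) + (Γ 27 - Γ 26) + (Γ 28 - Γ 27) + (Γ 29 - Γ 28) + (Γ 30 - Γ 29)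 + (Γ 31 - Γ 30) + (Γ 32 - Γ 31) + (Γ 33 - Γ 32) + (Γ 34 - Γ 33) + (Γ 35 - Γ 34) + (Γ 36 - Γ 35) + (Γ 37 - Γ 36) + (Γ 38 - Γ 37) + (Γ 39 - Γ 38) := by abel
      rw [hs3, hs4, hs5, hs6, hs7, hs8, hs9, hs10, hs11, hs12, hs13, hs14, hs15, hs16, hs17, hs18, hs19, hs20, hs21, hs22, hs23, hs24, hs25, hs26, hs27, hs28, hs29, hs30, hs31, hs32, hs33, hs34, hs35, hs36, hs37, hs38] at e
      have e2 : Γ 39 - Γ 1 = 0 := by rw [e]; abel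
      exact sub_eq_zero.mp e2
    have h39 : (39:ℕ) ∈ Set.Icc 1 39 := by norm_num
    have h1 : (1:ℕ) ∈ Set.Icc 1 39 := by norm_num
    exact absurd (hinj h39 h1 key) (by norm_num)
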